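/- For a tripartite pure state |ψ⟩^{RAB} with ψ^R = 𝟙/D, the conditional max-entropy satisfies H_max(A|B)_ψ ≤ log₂(λ₀^B · D), where λ₀^B is the largest eigenvalue of ψ^B, and H_max(A|B)_ψ is characterized as the logarithm of the minimum over positive semidefinite Z^{AB} satisfying 𝟙^R ⊗ Z^{AB} ≥ |ψ⟩⟨ψ|^{RAB} of the operator norm of Z^B = Tr_A Z^{AB}. -/

import Mathlib

open Matrix Kronecker Finset
open scoped ComplexConjugate Classical ComplexOrder

noncomputable section

/-- Density matrix (outer product) of a vector. -/
def dmv {n : Type*} (v : n → ℂ) : Matrix n n ℂ :=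
  Matrix.of fun i j => v i * conj (v j)

/-- Outer product `|u⟩⟨v|`. -/
def outer {n : Type*} (u v : n → ℂ) : Matrix n n ℂ :=
  Matrix.of fun i j => u i * conj (v j)

/-- Largest eigenvalue of a (Hermitian) matrix. -/
def maxEig {n : Type*} [Fintype n] [DecidableEq n] (A : Matrix n n ℂ) : ℝ :=
  if h : A.IsHermitian then ⨆ i, h.eigenvalues i else 0

/-- Sum of the `k` largest eigenvalues of a Hermitian matrix. -/
def topSum {n : Type*} [Fintype n] [DecidableEq n] (A : Matrix n n ℂ) (k : ℕ) : ℝ :=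
  if h : A.IsHermitian then
    sSup {x : ℝ | ∃ s : Finset n, s.card = k ∧ x = ∑ i ∈ s, h.eigenvalues i}
  else 0

/-- Majorization of Hermitian operators: `A ≺ B` (possibly on different spaces):
every partial sum of the `k` largest eigenvalues of `A` is at most that of `B`,
and the traces agree. -/
def Maj {m n : Type*} [Fintype m] [DecidableEq m] [Fintype n] [DecidableEq n]
    (A : Matrix m m ℂ) (B : Matrix n n ℂ) : Prop :=
  (∀ k : ℕ, topSum A k ≤ topSum B k) ∧ A.trace = B.trace

/-- Total matrix square root: the positive square root for PSD matrices, `0` otherwise. -/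
def msqrt {n : Type*} [Fintype n] [DecidableEq n] (A : Matrix n n ℂ) : Matrix n n ℂ :=
  if h : A.PosSemidef then
    h.1.eigenvectorUnitary.1 * diagonal (fun i => ((Real.sqrt (h.1.eigenvalues i) : ℝ) : ℂ)) *
      (star h.1.eigenvectorUnitary : Matrix n n ℂ)
  else 0

/-- Trace norm (sum of singular values). -/
def traceNorm {n : Type*} [Fintype n] [DecidableEq n] (A : Matrix n n ℂ) : ℝ :=
  ((msqrt (Aᴴ * A)).trace).re

/-- Fidelity `F(ρ,σ) = ‖√ρ √σ‖₁`. -/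
def fid {n : Type*} [Fintype n] [DecidableEq n] (ρ σ : Matrix n n ℂ) : ℝ :=
  traceNorm (msqrt ρ * msqrt σ)

/-- Purified distance `P(ρ,σ) = √(1 − F²(ρ,σ))`. -/
def pd {n : Type*} [Fintype n] [DecidableEq n] (ρ σ : Matrix n n ℂ) : ℝ :=
  Real.sqrt (1 - fid ρ σ ^ 2)

/-- Choi matrix of a map on matrices. -/
def choi {m n : Type*} [Fintype m] [DecidableEq m]
    (N : Matrix m m ℂ → Matrix n n ℂ) : Matrix (m × n) (m × n) ℂ :=
  Matrix.of fun p q => N (Matrix.single p.1 q.1 1) p.2 q.2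

/-- A map is mixed-unitary if it is a convex combination of unitary conjugations. -/
def IsMixedUnitary {n : Type*} [Fintype n] [DecidableEq n]
    (N : Matrix n n ℂ → Matrix n n ℂ) : Prop :=
  ∃ (m : ℕ) (p : Fin m → ℝ) (U : Fin m → Matrix n n ℂ),
    (∀ i, 0 ≤ p i) ∧ (∑ i, p i = 1) ∧ (∀ i, U i ∈ Matrix.unitaryGroup n ℂ) ∧
    ∀ ρ, N ρ = ∑ i, (p i : ℂ) • (U i * ρ * (U i)ᴴ)

/-- `id_R ⊗ M` acting blockwise on a matrix on `R × S`. -/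
def idTensor {R S T : Type*} (M : Matrix S S ℂ →ₗ[ℂ] Matrix T T ℂ)
    (ρ : Matrix (R × S) (R × S) ℂ) : Matrix (R × T) (R × T) ℂ :=
  Matrix.of fun p q => M (Matrix.of fun s s' => ρ (p.1, s) (q.1, s')) p.2 q.2

end

/-! The feasible point is `Z = D • ψ^{AB}`, whose `B`-marginal is `D • ψ^B`. Feasibility is
Cauchy–Schwarz over `R`: writing `ψ_r, w_r` for the slices of `ψ, w` at `r`,
`|⟨ψ, w⟩|² = |∑ r, ⟨ψ_r, w_r⟩|² ≤ D ∑ r, |⟨ψ_r, w_r⟩|² ≤ D ∑ r r', |⟨ψ_r', w_r⟩|² = ⟨w, (1 ⊗ Z) w⟩`.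
Since `logb` is monotone only on positive reals, the infimum must also be bounded away from `0`:
taking traces in `1 ⊗ Z ≥ |ψ⟩⟨ψ|` gives `D · tr Z ≥ 1`, so `λ_max(Z^B) ≥ tr Z^B / |B| ≥ 1 / (D |B|)`.
-/

lemma Complex.normSq_sum_le_card_mul {ι : Type*} [Fintype ι] (z : ι → ℂ) :
    Complex.normSq (∑ i, z i) ≤ Fintype.card ι * ∑ i, Complex.normSq (z i) := by
  simp only [← Complex.sq_norm]
  calc ‖∑ i, z i‖ ^ 2 ≤ (∑ i, ‖z i‖) ^ 2 := by gcongr; exact norm_sum_le _ _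
    _ ≤ _ := by simpa using sq_sum_le_card_mul_sum_sq (s := Finset.univ) (f := fun i => ‖z i‖)

section maxEig

variable {n : Type*} [Fintype n] [DecidableEq n] {A : Matrix n n ℂ}

lemma maxEig_eq_sSup_spectrum (hA : A.IsHermitian) : maxEig A = sSup (spectrum ℝ A) := by
  rw [maxEig, dif_pos hA, hA.spectrum_real_eq_range_eigenvalues, sSup_range]

lemma maxEig_smul [Nonempty n] (hA : A.IsHermitian) {c : ℝ} (hc : 0 ≤ c) :
    maxEig (c • A) = c * maxEig A := by
  have hcA : (c • A).IsHermitian := hA.smul (IsSelfAdjoint.all c)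
  rw [maxEig_eq_sSup_spectrum hA, maxEig_eq_sSup_spectrum hcA, spectrum.smul_eq_smul,
    Real.sSup_smul_of_nonneg hc, smul_eq_mul]
  rw [hA.spectrum_real_eq_range_eigenvalues]
  exact Set.range_nonempty _

lemma trace_re_le_card_mul_maxEig (hA : A.IsHermitian) :
    A.trace.re ≤ Fintype.card n * maxEig A := by
  rw [hA.trace_eq_sum_eigenvalues, maxEig, dif_pos hA, ← nsmul_eq_mul, ← Finset.card_univ,
    ← Finset.sum_const, Complex.re_sum]
  exact Finset.sum_le_sum fun i _ => by simpa using le_ciSup (Set.finite_range _).bddAbove i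

end maxEig

namespace Matrix

open Function (curry)

def traceLeft {A B : Type*} [Fintype A] (Z : Matrix (A × B) (A × B) ℂ) : Matrix B B ℂ :=
  of fun b b' => ∑ a, Z (a, b) (a, b')

section traceLeft

variable {A B : Type*} [Fintype A]

lemma IsHermitian.traceLeft {Z : Matrix (A × B) (A × B) ℂ} (hZ : Z.IsHermitian) :
    (traceLeft Z).IsHermitian := by
  ext b b'
  simp only [conjTranspose_apply, Matrix.traceLeft, of_apply, star_sum]
  exact Finset.sum_congr rfl fun a _ => hZ.apply (a, b) (a, b')

lemma traceLeft_smul (c : ℝ) (Z : Matrix (A × B) (A × B) ℂ) :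
    traceLeft (c • Z) = c • traceLeft Z := by
  ext b b'
  simp [traceLeft, Finset.smul_sum]

lemma trace_traceLeft [Fintype B] (Z : Matrix (A × B) (A × B) ℂ) :
    (traceLeft Z).trace = Z.trace := by
  simp only [trace, diag, traceLeft, of_apply, Fintype.sum_prod_type]
  exact Finset.sum_comm

end traceLeft

section dmv

variable {n : Type*}

lemma dmv_eq_vecMulVec (v : n → ℂ) : dmv v = vecMulVec v (star v) := rfl

variable [Fintype n]

lemma posSemidef_dmv (v : n → ℂ) : (dmv v).PosSemidef :=
  posSemidef_vecMulVec_self_star v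

lemma trace_dmv (v : n → ℂ) : (dmv v).trace = ↑(∑ i, ‖v i‖ ^ 2) := by
  simp [trace, dmv, Complex.mul_conj, Complex.normSq_eq_norm_sq]

lemma star_dotProduct_dmv_mulVec (v w : n → ℂ) :
    star w ⬝ᵥ dmv v *ᵥ w = Complex.normSq (star v ⬝ᵥ w) := by
  have hconj : star w ⬝ᵥ v = conj (star v ⬝ᵥ w) := by
    rw [← star_star v, star_dotProduct_star, star_star]; rfl
  rw [dmv_eq_vecMulVec, vecMulVec_mulVec, Complex.normSq_eq_conj_mul_self, ← hconj]
  simp [dotProduct_smul, mul_comm]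

end dmv

section bipartite

variable {R I : Type*} [Fintype R]

lemma traceLeft_dmv (ψ : R × I → ℂ) : traceLeft (dmv ψ) = ∑ r, dmv (curry ψ r) := by
  ext i j
  simp [traceLeft, dmv, sum_apply, curry]

variable [Fintype I]

lemma posSemidef_traceLeft_dmv (ψ : R × I → ℂ) : (traceLeft (dmv ψ)).PosSemidef := by
  rw [traceLeft_dmv]
  exact posSemidef_sum _ fun r _ => posSemidef_dmv _

lemma star_dotProduct_eq_sum_curry (v w : R × I → ℂ) :
    star v ⬝ᵥ w = ∑ r, star (curry v r) ⬝ᵥ curry w r := by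
  simp [dotProduct, Fintype.sum_prod_type, curry]

lemma star_dotProduct_traceLeft_dmv_mulVec (ψ : R × I → ℂ) (u : I → ℂ) :
    star u ⬝ᵥ traceLeft (dmv ψ) *ᵥ u = ↑(∑ r, Complex.normSq (star (curry ψ r) ⬝ᵥ u)) := by
  simp [traceLeft_dmv, sum_mulVec, dotProduct_sum, star_dotProduct_dmv_mulVec]

variable [DecidableEq R]

lemma star_dotProduct_one_kronecker_mulVec (M : Matrix I I ℂ) (w : R × I → ℂ) :
    star w ⬝ᵥ ((1 : Matrix R R ℂ) ⊗ₖ M) *ᵥ w = ∑ r, star (curry w r) ⬝ᵥ M *ᵥ curry w r := by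
  simp [dotProduct, mulVec, Fintype.sum_prod_type, one_apply, curry]

theorem posSemidef_one_kronecker_card_smul_traceLeft_dmv_sub_dmv (ψ : R × I → ℂ) :
    ((1 : Matrix R R ℂ) ⊗ₖ ((Fintype.card R : ℝ) • traceLeft (dmv ψ)) - dmv ψ).PosSemidef := by
  have hZ : ((Fintype.card R : ℝ) • traceLeft (dmv ψ)).PosSemidef :=
    (posSemidef_traceLeft_dmv ψ).smul (Nat.cast_nonneg _)
  refine .of_dotProduct_mulVec_nonneg ((PosSemidef.one.kronecker hZ).1.sub (posSemidef_dmv ψ).1)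
    fun w => ?_
  set z : R → R → ℂ := fun r r' => star (curry ψ r') ⬝ᵥ curry w r
  have hdiag : Complex.normSq (∑ r, z r r) ≤ Fintype.card R * ∑ r, Complex.normSq (z r r) :=
    Complex.normSq_sum_le_card_mul _
  have hoff : ∑ r, Complex.normSq (z r r) ≤ ∑ r, ∑ r', Complex.normSq (z r r') :=
    Finset.sum_le_sum fun r _ =>
      Finset.single_le_sum (fun r' _ => Complex.normSq_nonneg (z r r')) (Finset.mem_univ r)
  have key : Complex.normSq (∑ r, z r r)
      ≤ ∑ r, Fintype.card R * ∑ r', Complex.normSq (z r r') := by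
    rw [← Finset.mul_sum]
    exact hdiag.trans (by gcongr)
  rw [sub_mulVec, dotProduct_sub, sub_nonneg, star_dotProduct_one_kronecker_mulVec,
    star_dotProduct_dmv_mulVec, star_dotProduct_eq_sum_curry]
  simp only [smul_mulVec, dotProduct_smul, star_dotProduct_traceLeft_dmv_mulVec,
    Complex.real_smul]
  exact_mod_cast key

theorem one_le_card_mul_trace_of_posSemidef_one_kronecker_sub_dmv {ψ : R × I → ℂ}
    (hψ : ∑ x, ‖ψ x‖ ^ 2 = 1) {Z : Matrix I I ℂ}
    (hZ : ((1 : Matrix R R ℂ) ⊗ₖ Z - dmv ψ).PosSemidef) :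
    1 ≤ Fintype.card R * Z.trace.re := by
  have h := hZ.trace_nonneg
  rw [trace_sub, trace_kronecker, trace_one, trace_dmv, hψ, sub_nonneg] at h
  simpa using (Complex.le_def.mp h).1

end bipartite

end Matrix

theorem stmt4_general {Rt At Bt : Type*} [Fintype Rt] [Fintype At] [Fintype Bt]
    [DecidableEq Rt] [DecidableEq Bt] [Nonempty Bt]
    (ψ : Rt × At × Bt → ℂ)
    (hunit : ∑ x, ‖ψ x‖ ^ 2 = 1)
    (D : ℕ) (hD : D = Fintype.card Rt) (hDpos : 0 < D) :
    Real.logb 2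
        (sInf {x : ℝ | ∃ Z : Matrix (At × Bt) (At × Bt) ℂ, Z.PosSemidef ∧
          ((1 : Matrix Rt Rt ℂ) ⊗ₖ Z - dmv ψ).PosSemidef ∧
          x = maxEig (Matrix.of fun b b' : Bt => ∑ a, Z (a, b) (a, b'))}) ≤
      Real.logb 2
        (maxEig (Matrix.of fun b b' : Bt => ∑ r, ∑ a, ψ (r, a, b) * conj (ψ (r, a, b'))) * D) := by
  subst hD
  set S := {x : ℝ | ∃ Z : Matrix (At × Bt) (At × Bt) ℂ, Z.PosSemidef ∧
    ((1 : Matrix Rt Rt ℂ) ⊗ₖ Z - dmv ψ).PosSemidef ∧ x = maxEig (traceLeft Z)}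
  have hψB : (Matrix.of fun b b' : Bt => ∑ r, ∑ a, ψ (r, a, b) * conj (ψ (r, a, b')))
      = traceLeft (traceLeft (dmv ψ)) := by
    ext b b'
    simp only [traceLeft, dmv, of_apply]
    exact Finset.sum_comm
  have hfeas : maxEig (traceLeft (traceLeft (dmv ψ))) * Fintype.card Rt ∈ S := by
    refine ⟨(Fintype.card Rt : ℝ) • traceLeft (dmv ψ),
      (posSemidef_traceLeft_dmv ψ).smul (Nat.cast_nonneg _),
      posSemidef_one_kronecker_card_smul_traceLeft_dmv_sub_dmv ψ, ?_⟩
    rw [traceLeft_smul, maxEig_smul (posSemidef_traceLeft_dmv ψ).1.traceLeft (Nat.cast_nonneg _),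
      mul_comm]
  have hlow : ∀ x ∈ S, (Fintype.card Rt * Fintype.card Bt : ℝ)⁻¹ ≤ x := by
    rintro x ⟨Z, hZ, hZψ, rfl⟩
    have htrace := one_le_card_mul_trace_of_posSemidef_one_kronecker_sub_dmv hunit hZψ
    rw [← trace_traceLeft] at htrace
    rw [inv_le_iff_one_le_mul₀ (by positivity)]
    calc (1 : ℝ) ≤ Fintype.card Rt * (traceLeft Z).trace.re := htrace
      _ ≤ Fintype.card Rt * (Fintype.card Bt * maxEig (traceLeft Z)) := by gcongr; exact trace_re_le_card_mul_maxEig hZ.1.traceLeft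
      _ = _ := by ring
  have hpos : 0 < sInf S :=
    (inv_pos.mpr (by positivity)).trans_le (le_csInf ⟨_, hfeas⟩ hlow)
  rw [hψB]
  exact Real.logb_le_logb_of_le one_lt_two hpos (csInf_le ⟨_, hlow⟩ hfeas)

/-- the SDP characterization of the conditional max-entropy is bounded by
`log₂(λ₀^B · D)` for a tripartite pure state with maximally mixed marginal on `R`. -/
theorem stmt4 {Rt At Bt : Type*} [Fintype Rt] [Fintype At] [Fintype Bt]
    [DecidableEq Rt] [DecidableEq At] [DecidableEq Bt] [Nonempty Bt]
    (ψ : Rt × At × Bt → ℂ)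
    (hunit : ∑ x, ‖ψ x‖ ^ 2 = 1)
    (D : ℕ) (hD : D = Fintype.card Rt) (hDpos : 0 < D)
    (hmix : (Matrix.of fun r r' : Rt => ∑ a, ∑ b, ψ (r, a, b) * conj (ψ (r', a, b)))
      = (D : ℂ)⁻¹ • (1 : Matrix Rt Rt ℂ)) :
    Real.logb 2
        (sInf {x : ℝ | ∃ Z : Matrix (At × Bt) (At × Bt) ℂ, Z.PosSemidef ∧
          ((1 : Matrix Rt Rt ℂ) ⊗ₖ Z - dmv ψ).PosSemidef ∧
          x = maxEig (Matrix.of fun b b' : Bt => ∑ a, Z (a, b) (a, b'))}) ≤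
      Real.logb 2
        (maxEig (Matrix.of fun b b' : Bt => ∑ r, ∑ a, ψ (r, a, b) * conj (ψ (r, a, b'))) * D) :=
  stmt4_general ψ hunit D hD hDpos
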